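/- Let d₀ be the length metric on ℝ × X defined by d₀((θ₁,u₁),(θ₂,u₂)) := inf over C¹ paths σ : [0,1] → ℝ × X joining the two points of ∫₀¹ ‖σ'(τ)‖_{σ(τ)} dτ, where ‖(θ̃,ũ)‖_{(θ,u)} := (θ̃² + ‖T_θ ũ‖²_X)^{1/2}. Then the metric space (ℝ × X, d₀) is complete. -/

import Mathlib

open MeasureTheory Filter

/-- Length of a path `σ : [0,1] → ℝ × X` with respect to the moving norms
`‖(θ̃,ũ)‖_{(θ,u)} = (θ̃² + ‖T_θ ũ‖²)^{1/2}`. -/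
noncomputable def pathLen {X : Type*} [NormedAddCommGroup X] [NormedSpace ℝ X]
    (T : ℝ → X →L[ℝ] X) (σ : ℝ → ℝ × X) : ℝ :=
  ∫ τ in (0:ℝ)..1,
    Real.sqrt ((deriv σ τ).1 ^ 2 + ‖T ((σ τ).1) (deriv σ τ).2‖ ^ 2)

/-- The length metric `d₀` on `ℝ × X` from the paper. -/
noncomputable def d0 {X : Type*} [NormedAddCommGroup X] [NormedSpace ℝ X]
    (T : ℝ → X →L[ℝ] X) (p q : ℝ × X) : ℝ :=
  sInf { L : ℝ | ∃ σ : ℝ → ℝ × X, ContDiffOn ℝ 1 σ (Set.Icc 0 1) ∧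
      σ 0 = p ∧ σ 1 = q ∧ L = pathLen T σ }

open Set Topology

/-!
Locally, `d₀` and the norm metric of `ℝ × X` control each other. Along a `C¹` path of length
`L` one has `|θ(τ) - θ(0)| ≤ L` at all times, and the operators `T_s`, `|s| ≤ L`, are bounded by
some `A` (Banach–Steinhaus); transporting the velocity back to `θ(0)` with the group law gives
`‖T_{θ(0)} (u(1) - u(0))‖ ≤ A L`. Hence a `d₀`-Cauchy sequence is Cauchy in `ℝ × X` and
converges there, and the straight segment to the limit has length at most
`|Δθ| + C ‖Δu‖ → 0`.
-/

section StronglyContinuous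

variable {α 𝕜 E F : Type*} [TopologicalSpace α] [NontriviallyNormedField 𝕜]
  [NormedAddCommGroup E] [NormedSpace 𝕜 E] [CompleteSpace E]
  [NormedAddCommGroup F] [NormedSpace 𝕜 F] {T : α → E →L[𝕜] F}

theorem IsCompact.exists_opNorm_le_of_continuousOn_apply {K : Set α} (hK : IsCompact K)
    (hT : ∀ v, ContinuousOn (fun a => T a v) K) : ∃ C, ∀ a ∈ K, ‖T a‖ ≤ C := by
  have hpointwise : ∀ v, ∃ C, ∀ a : K, ‖T a v‖ ≤ C := fun v => by
    obtain ⟨C, hC⟩ := hK.exists_bound_of_continuousOn (hT v)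
    exact ⟨C, fun a => hC a a.2⟩
  obtain ⟨C, hC⟩ := banach_steinhaus hpointwise
  exact ⟨C, fun a ha => hC ⟨a, ha⟩⟩

theorem continuous_uncurry_of_continuous_apply [WeaklyLocallyCompactSpace α]
    (hT : ∀ v, Continuous fun a => T a v) : Continuous fun z : α × E => T z.1 z.2 := by
  refine continuous_iff_continuousAt.2 fun ⟨a₀, v₀⟩ => ?_
  obtain ⟨K, hK, hKa₀⟩ := exists_compact_mem_nhds a₀
  obtain ⟨C, hC⟩ := hK.exists_opNorm_le_of_continuousOn_apply fun v => (hT v).continuousOn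
  have hbound : ∀ᶠ z : α × E in 𝓝 (a₀, v₀),
      ‖T z.1 z.2 - T a₀ v₀‖ ≤ C * ‖z.2 - v₀‖ + ‖T z.1 v₀ - T a₀ v₀‖ := by
    filter_upwards [continuousAt_fst.preimage_mem_nhds hKa₀] with z hz
    calc ‖T z.1 z.2 - T a₀ v₀‖ = ‖T z.1 (z.2 - v₀) + (T z.1 v₀ - T a₀ v₀)‖ := by
          rw [map_sub]; abel_nf
      _ ≤ ‖T z.1 (z.2 - v₀)‖ + ‖T z.1 v₀ - T a₀ v₀‖ := norm_add_le _ _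
      _ ≤ C * ‖z.2 - v₀‖ + ‖T z.1 v₀ - T a₀ v₀‖ := by
        gcongr
        exact (T z.1).le_of_opNorm_le (hC _ hz) _
  have hlim : Tendsto (fun z : α × E => C * ‖z.2 - v₀‖ + ‖T z.1 v₀ - T a₀ v₀‖)
      (𝓝 (a₀, v₀)) (𝓝 0) := by
    have hcont : Continuous fun z : α × E => C * ‖z.2 - v₀‖ + ‖T z.1 v₀ - T a₀ v₀‖ := by
      fun_prop
    simpa using hcont.tendsto (a₀, v₀)
  rw [ContinuousAt, tendsto_iff_norm_sub_tendsto_zero]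
  exact squeeze_zero' (.of_forall fun _ => norm_nonneg _) hbound hlim

end StronglyContinuous

theorem ContDiffOn.intervalIntegrable_comp_deriv {E F : Type*} [NormedAddCommGroup E]
    [NormedSpace ℝ E] [NormedAddCommGroup F] {f : ℝ → E} {a b : ℝ}
    (hf : ContDiffOn ℝ 1 f (Icc a b)) (hab : a ≤ b) {Φ : E → E → F}
    (hΦ : Continuous (Function.uncurry Φ)) :
    IntervalIntegrable (fun x => Φ (f x) (deriv f x)) volume a b := by
  rcases hab.eq_or_lt with rfl | hab'
  · exact .refl
  have hcont : ContinuousOn (fun x => Φ (f x) (derivWithin f (Icc a b) x)) (Icc a b) :=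
    hΦ.comp_continuousOn
      (hf.continuousOn.prodMk (hf.continuousOn_derivWithin (uniqueDiffOn_Icc hab') le_rfl))
  refine (hcont.intervalIntegrable_of_Icc hab).congr_ae ?_
  rw [uIoc_of_le hab, ← restrict_Ioo_eq_restrict_Ioc]
  filter_upwards [self_mem_ae_restrict measurableSet_Ioo] with x hx
  rw [derivWithin_of_mem_nhds (Icc_mem_nhds hx.1 hx.2)]

section LocalNorm

variable {X : Type*} [NormedAddCommGroup X] [NormedSpace ℝ X] (T : ℝ → X →L[ℝ] X)

/-- The norm `‖(θ̃,ũ)‖_{(θ,u)}` of the tangent vector `v = (θ̃,ũ)` at `x = (θ,u)`;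
`pathLen T σ` is definitionally `∫ τ in 0..1, localNorm T (σ τ) (deriv σ τ)`. -/
noncomputable def localNorm (x v : ℝ × X) : ℝ :=
  Real.sqrt (v.1 ^ 2 + ‖T x.1 v.2‖ ^ 2)

theorem localNorm_nonneg (x v : ℝ × X) : 0 ≤ localNorm T x v :=
  Real.sqrt_nonneg _

theorem abs_fst_le_localNorm (x v : ℝ × X) : |v.1| ≤ localNorm T x v :=
  Real.abs_le_sqrt (le_add_of_nonneg_right (by positivity))

theorem norm_apply_snd_le_localNorm (x v : ℝ × X) : ‖T x.1 v.2‖ ≤ localNorm T x v :=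
  Real.le_sqrt_of_sq_le (le_add_of_nonneg_left (by positivity))

theorem localNorm_le (x v : ℝ × X) : localNorm T x v ≤ |v.1| + ‖T x.1 v.2‖ := by
  rw [localNorm, Real.sqrt_le_left (by positivity)]
  nlinarith [sq_abs v.1, abs_nonneg v.1, norm_nonneg (T x.1 v.2)]

variable {T}

theorem continuous_localNorm (hT : Continuous fun z : ℝ × X => T z.1 z.2) :
    Continuous (Function.uncurry (localNorm T)) := by
  unfold localNorm
  have : Continuous fun z : (ℝ × X) × (ℝ × X) => T z.1.1 z.2.2 :=
    hT.comp (continuous_fst.fst.prodMk continuous_snd.snd)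
  fun_prop

theorem pathLen_nonneg (σ : ℝ → ℝ × X) : 0 ≤ pathLen T σ :=
  intervalIntegral.integral_nonneg zero_le_one fun _ _ => localNorm_nonneg T _ _

end LocalNorm

theorem ContDiffOn.map_sub_eq_integral_deriv {E F : Type*} [NormedAddCommGroup E]
    [NormedSpace ℝ E] [CompleteSpace E] [NormedAddCommGroup F] [NormedSpace ℝ F]
    [CompleteSpace F] {f : ℝ → E} {a b : ℝ} (hf : ContDiffOn ℝ 1 f (Icc a b)) (hab : a ≤ b)
    (L : E →L[ℝ] F) : L (f b - f a) = ∫ x in a..b, L (deriv f x) := by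
  rw [← intervalIntegral.integral_deriv_of_contDiffOn_Icc hf hab, L.intervalIntegral_comp_comm
    (hf.intervalIntegrable_comp_deriv hab (Φ := fun _ v => v) continuous_snd)]

section Path

variable {X : Type*} [NormedAddCommGroup X] [NormedSpace ℝ X] [CompleteSpace X]
  {T : ℝ → X →L[ℝ] X} (hT : Continuous fun z : ℝ × X => T z.1 z.2)
  {σ : ℝ → ℝ × X} (hσ : ContDiffOn ℝ 1 σ (Icc 0 1))
include hT hσ

theorem abs_fst_sub_le_pathLen {t : ℝ} (ht : t ∈ Icc (0 : ℝ) 1) :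
    |(σ t).1 - (σ 0).1| ≤ pathLen T σ := by
  have hσt : ContDiffOn ℝ 1 σ (Icc 0 t) := hσ.mono (Icc_subset_Icc_right ht.2)
  have hint : ∀ {b}, ContDiffOn ℝ 1 σ (Icc 0 b) → 0 ≤ b →
      IntervalIntegrable (fun τ => localNorm T (σ τ) (deriv σ τ)) volume 0 b :=
    fun h hb => h.intervalIntegrable_comp_deriv hb (continuous_localNorm hT)
  calc |(σ t).1 - (σ 0).1| = ‖∫ τ in (0:ℝ)..t, (deriv σ τ).1‖ :=
        congrArg norm (hσt.map_sub_eq_integral_deriv ht.1 (.fst ℝ ℝ X))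
    _ ≤ ∫ τ in (0:ℝ)..t, ‖(deriv σ τ).1‖ :=
        intervalIntegral.norm_integral_le_integral_norm ht.1
    _ ≤ ∫ τ in (0:ℝ)..t, localNorm T (σ τ) (deriv σ τ) :=
        intervalIntegral.integral_mono_on ht.1
          (hσt.intervalIntegrable_comp_deriv ht.1 (Φ := fun _ v => ‖v.1‖) (by fun_prop))
          (hint hσt ht.1) fun τ _ => abs_fst_le_localNorm T _ _
    _ ≤ pathLen T σ :=
        intervalIntegral.integral_mono_interval le_rfl ht.1 ht.2
          (.of_forall fun τ => localNorm_nonneg T _ _) (hint hσ zero_le_one)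

theorem norm_apply_snd_sub_le_mul_pathLen
    (hTadd : ∀ θ₁ θ₂ : ℝ, T (θ₁ + θ₂) = (T θ₁).comp (T θ₂))
    {A : ℝ} (hA : ∀ s : ℝ, |s| ≤ pathLen T σ → ‖T s‖ ≤ A) :
    ‖T (σ 0).1 ((σ 1).2 - (σ 0).2)‖ ≤ A * pathLen T σ := by
  have hA₀ : 0 ≤ A := (norm_nonneg _).trans (hA 0 (by simpa using pathLen_nonneg σ))
  have hpointwise : ∀ τ ∈ Icc (0 : ℝ) 1,
      ‖T (σ 0).1 (deriv σ τ).2‖ ≤ A * localNorm T (σ τ) (deriv σ τ) := by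
    intro τ hτ
    have htransport : T (σ 0).1 = (T ((σ 0).1 - (σ τ).1)).comp (T (σ τ).1) := by
      rw [← hTadd, sub_add_cancel]
    rw [htransport]
    refine ((T _).le_opNorm _).trans (mul_le_mul ?_ (norm_apply_snd_le_localNorm T _ _)
      (norm_nonneg _) hA₀)
    exact hA _ (by rw [abs_sub_comm]; exact abs_fst_sub_le_pathLen hT hσ hτ)
  calc ‖T (σ 0).1 ((σ 1).2 - (σ 0).2)‖
      = ‖∫ τ in (0:ℝ)..1, T (σ 0).1 (deriv σ τ).2‖ :=
        congrArg norm (hσ.map_sub_eq_integral_deriv zero_le_one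
          ((T (σ 0).1).comp (.snd ℝ ℝ X)))
    _ ≤ ∫ τ in (0:ℝ)..1, ‖T (σ 0).1 (deriv σ τ).2‖ :=
        intervalIntegral.norm_integral_le_integral_norm zero_le_one
    _ ≤ ∫ τ in (0:ℝ)..1, A * localNorm T (σ τ) (deriv σ τ) :=
        intervalIntegral.integral_mono_on zero_le_one
          (hσ.intervalIntegrable_comp_deriv zero_le_one (Φ := fun _ v => ‖T (σ 0).1 v.2‖)
            (by fun_prop))
          ((hσ.intervalIntegrable_comp_deriv zero_le_one
            (continuous_localNorm hT)).const_mul A)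
          hpointwise
    _ = A * pathLen T σ := intervalIntegral.integral_const_mul _ _

end Path

section LengthMetric

variable {X : Type*} [NormedAddCommGroup X] [NormedSpace ℝ X] {T : ℝ → X →L[ℝ] X}

theorem contDiff_add_smul_sub (p q : ℝ × X) : ContDiff ℝ 1 fun τ : ℝ => p + τ • (q - p) := by
  fun_prop

theorem d0_le_pathLen {σ : ℝ → ℝ × X} (hσ : ContDiffOn ℝ 1 σ (Icc 0 1)) {p q : ℝ × X}
    (h0 : σ 0 = p) (h1 : σ 1 = q) : d0 T p q ≤ pathLen T σ :=
  csInf_le ⟨0, by rintro L ⟨σ, -, -, -, rfl⟩; exact pathLen_nonneg σ⟩ ⟨σ, hσ, h0, h1, rfl⟩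

theorem exists_pathLen_lt_of_d0_lt {p q : ℝ × X} {r : ℝ} (hr : d0 T p q < r) :
    ∃ σ : ℝ → ℝ × X, ContDiffOn ℝ 1 σ (Icc 0 1) ∧ σ 0 = p ∧ σ 1 = q ∧ pathLen T σ < r := by
  obtain ⟨L, ⟨σ, hσ, h0, h1, rfl⟩, hL⟩ := exists_lt_of_csInf_lt
    (by exact ⟨_, _, (contDiff_add_smul_sub p q).contDiffOn, by simp, by simp, rfl⟩) hr
  exact ⟨σ, hσ, h0, h1, hL⟩

theorem le_d0 {p q : ℝ × X} {c : ℝ} (h : ∀ σ : ℝ → ℝ × X, ContDiffOn ℝ 1 σ (Icc 0 1) →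
    σ 0 = p → σ 1 = q → c ≤ pathLen T σ) : c ≤ d0 T p q :=
  le_of_forall_gt fun r hr => by
    obtain ⟨σ, hσ, h0, h1, hσr⟩ := exists_pathLen_lt_of_d0_lt hr
    exact (h σ hσ h0 h1).trans_lt hσr

theorem d0_nonneg (p q : ℝ × X) : 0 ≤ d0 T p q :=
  le_d0 fun σ _ _ _ => pathLen_nonneg σ

variable (hT : Continuous fun z : ℝ × X => T z.1 z.2)
include hT

theorem d0_le_abs_sub_add_mul_norm_sub {p q : ℝ × X} {C : ℝ}
    (hC : ∀ s ∈ uIcc p.1 q.1, ‖T s‖ ≤ C) :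
    d0 T p q ≤ |q.1 - p.1| + C * ‖q.2 - p.2‖ := by
  set σ : ℝ → ℝ × X := fun τ => p + τ • (q - p)
  have hderiv : ∀ τ, deriv σ τ = q - p := fun τ =>
    ((((hasDerivAt_id' τ).smul_const (q - p)).const_add p).congr_deriv (one_smul ℝ _)).deriv
  calc d0 T p q ≤ pathLen T σ :=
        d0_le_pathLen (contDiff_add_smul_sub p q).contDiffOn (by simp) (by simp)
    _ ≤ ∫ _ in (0:ℝ)..1, (|q.1 - p.1| + C * ‖q.2 - p.2‖) := by
        refine intervalIntegral.integral_mono_on zero_le_one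
          ((contDiff_add_smul_sub p q).contDiffOn.intervalIntegrable_comp_deriv zero_le_one
            (continuous_localNorm hT)) intervalIntegrable_const fun τ hτ => ?_
        have hmem : (σ τ).1 ∈ uIcc p.1 q.1 :=
          (convex_uIcc p.1 q.1).add_smul_sub_mem left_mem_uIcc right_mem_uIcc hτ
        rw [hderiv]
        exact (localNorm_le T _ _).trans
          (add_le_add le_rfl ((T _).le_of_opNorm_le (hC _ hmem) _))
    _ = |q.1 - p.1| + C * ‖q.2 - p.2‖ := by simp

variable [CompleteSpace X]

theorem dist_fst_le_d0 (p q : ℝ × X) : dist p.1 q.1 ≤ d0 T p q :=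
  le_d0 fun σ hσ h0 h1 => by
    rw [Real.dist_eq, abs_sub_comm, ← h0, ← h1]
    exact abs_fst_sub_le_pathLen hT hσ (right_mem_Icc.2 zero_le_one)

theorem dist_snd_le_of_d0_lt (hT0 : T 0 = ContinuousLinearMap.id ℝ X)
    (hTadd : ∀ θ₁ θ₂ : ℝ, T (θ₁ + θ₂) = (T θ₁).comp (T θ₂))
    {p q : ℝ × X} {r A : ℝ} (hr : d0 T p q < r) (hA : ∀ s ∈ Icc (-r) r, ‖T s‖ ≤ A) :
    dist p.2 q.2 ≤ ‖T (-p.1)‖ * (A * r) := by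
  have hr₀ : 0 ≤ r := (d0_nonneg p q).trans hr.le
  have hA₀ : 0 ≤ A := (norm_nonneg _).trans (hA 0 ⟨neg_nonpos.2 hr₀, hr₀⟩)
  obtain ⟨σ, hσ, rfl, rfl, hσr⟩ := exists_pathLen_lt_of_d0_lt hr
  have hinv : T (-(σ 0).1) (T (σ 0).1 ((σ 1).2 - (σ 0).2)) = (σ 1).2 - (σ 0).2 := by
    rw [← ContinuousLinearMap.comp_apply, ← hTadd, neg_add_cancel, hT0]
    rfl
  calc dist (σ 0).2 (σ 1).2 = ‖T (-(σ 0).1) (T (σ 0).1 ((σ 1).2 - (σ 0).2))‖ := by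
        rw [hinv, dist_comm, dist_eq_norm]
    _ ≤ ‖T (-(σ 0).1)‖ * ‖T (σ 0).1 ((σ 1).2 - (σ 0).2)‖ := (T _).le_opNorm _
    _ ≤ ‖T (-(σ 0).1)‖ * (A * pathLen T σ) := by
        gcongr
        exact norm_apply_snd_sub_le_mul_pathLen hT hσ hTadd fun s hs =>
          hA s (abs_le.1 (hs.trans hσr.le))
    _ ≤ ‖T (-(σ 0).1)‖ * (A * r) := by gcongr

end LengthMetric

section Completeness

variable {X : Type*} [NormedAddCommGroup X] [NormedSpace ℝ X] [CompleteSpace X]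
  {T : ℝ → X →L[ℝ] X} (hTcont : ∀ v, Continuous fun θ : ℝ => T θ v)
include hTcont

theorem tendsto_d0_of_tendsto {ι : Type*} {l : Filter ι} {p : ι → ℝ × X} {q : ℝ × X}
    (hp : Tendsto p l (𝓝 q)) : Tendsto (fun i => d0 T (p i) q) l (𝓝 0) := by
  obtain ⟨C, hC⟩ := (isCompact_Icc : IsCompact (Icc (q.1 - 1) (q.1 + 1)))
    |>.exists_opNorm_le_of_continuousOn_apply fun v => (hTcont v).continuousOn
  have hnear : ∀ᶠ i in l, (p i).1 ∈ Icc (q.1 - 1) (q.1 + 1) :=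
    (continuous_fst.tendsto q).comp hp (Icc_mem_nhds (by linarith) (by linarith))
  have hbound : ∀ᶠ i in l, d0 T (p i) q ≤ |q.1 - (p i).1| + C * ‖q.2 - (p i).2‖ :=
    hnear.mono fun i hi => d0_le_abs_sub_add_mul_norm_sub
      (continuous_uncurry_of_continuous_apply hTcont)
      fun s hs => hC s (uIcc_subset_Icc hi ⟨by linarith, by linarith⟩ hs)
  have hlim : Tendsto (fun i => |q.1 - (p i).1| + C * ‖q.2 - (p i).2‖) l (𝓝 0) := by
    have hcont : Continuous fun z : ℝ × X => |q.1 - z.1| + C * ‖q.2 - z.2‖ := by fun_prop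
    simpa [Function.comp_def] using (hcont.tendsto q).comp hp
  exact squeeze_zero' (.of_forall fun _ => d0_nonneg _ _) hbound hlim

theorem cauchySeq_of_forall_d0_lt (hT0 : T 0 = ContinuousLinearMap.id ℝ X)
    (hTadd : ∀ θ₁ θ₂ : ℝ, T (θ₁ + θ₂) = (T θ₁).comp (T θ₂)) {p : ℕ → ℝ × X}
    (hp : ∀ ε : ℝ, 0 < ε → ∃ n₀ : ℕ, ∀ m n : ℕ, n₀ ≤ m → n₀ ≤ n → d0 T (p m) (p n) < ε) :
    CauchySeq p := by
  have hT := continuous_uncurry_of_continuous_apply hTcont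
  have hfst : CauchySeq fun n => (p n).1 := Metric.cauchySeq_iff.2 fun ε hε =>
    (hp ε hε).imp fun N hN m hm n hn => (dist_fst_le_d0 hT _ _).trans_lt (hN m n hm hn)
  obtain ⟨R, hR⟩ := isBounded_iff_forall_norm_le.1 hfst.isBounded_range
  obtain ⟨C, hC⟩ := (isCompact_Icc : IsCompact (Icc (-R) R))
    |>.exists_opNorm_le_of_continuousOn_apply fun v => (hTcont v).continuousOn
  obtain ⟨A, hA⟩ := (isCompact_Icc : IsCompact (Icc (-1 : ℝ) 1))
    |>.exists_opNorm_le_of_continuousOn_apply fun v => (hTcont v).continuousOn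
  have hmem : ∀ m, -(p m).1 ∈ Icc (-R) R := fun m =>
    abs_le.1 (by rw [abs_neg]; exact hR _ (mem_range_self m))
  have hC₀ : 0 ≤ C := (norm_nonneg _).trans (hC _ (hmem 0))
  have hA₀ : 0 ≤ A := (norm_nonneg _).trans (hA 0 ⟨by norm_num, by norm_num⟩)
  have hsnd : CauchySeq fun n => (p n).2 := by
    refine Metric.cauchySeq_iff.2 fun ε hε => ?_
    have hK : 0 < C * A + 1 := by positivity
    have hr : 0 < min 1 (ε / (C * A + 1)) := lt_min one_pos (div_pos hε hK)
    obtain ⟨N, hN⟩ := hp _ hr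
    refine ⟨N, fun m hm n hn => ?_⟩
    calc dist (p m).2 (p n).2 ≤ ‖T (-(p m).1)‖ * (A * min 1 (ε / (C * A + 1))) :=
          dist_snd_le_of_d0_lt hT hT0 hTadd (hN m n hm hn) fun s hs =>
            hA s (Icc_subset_Icc (neg_le_neg (min_le_left _ _)) (min_le_left _ _) hs)
      _ ≤ C * (A * (ε / (C * A + 1))) := by
          gcongr
          · exact hC _ (hmem m)
          · exact min_le_right _ _
      _ < ε := by
          rw [← mul_assoc, mul_div_assoc', div_lt_iff₀ hK]
          linarith
  exact hfst.prodMk hsnd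

end Completeness

/-- `(ℝ × X, d₀)` is complete. -/
theorem stmt_3
    {X : Type*} [NormedAddCommGroup X] [NormedSpace ℝ X] [CompleteSpace X]
    (T : ℝ → X →L[ℝ] X)
    (hT0 : T 0 = ContinuousLinearMap.id ℝ X)
    (hTadd : ∀ θ₁ θ₂ : ℝ, T (θ₁ + θ₂) = (T θ₁).comp (T θ₂))
    (hTcont : ∀ u : X, Continuous fun θ : ℝ => T θ u) :
    ∀ p : ℕ → ℝ × X,
      (∀ ε : ℝ, 0 < ε → ∃ n₀ : ℕ, ∀ m n : ℕ, n₀ ≤ m → n₀ ≤ n →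
        d0 T (p m) (p n) < ε) →
      ∃ q : ℝ × X, Tendsto (fun n => d0 T (p n) q) atTop (nhds 0) := by
  intro p hp
  obtain ⟨q, hq⟩ := cauchySeq_tendsto_of_complete (cauchySeq_of_forall_d0_lt hTcont hT0 hTadd hp)
  exact ⟨q, tendsto_d0_of_tendsto hTcont hq⟩
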